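/- arXiv:2506.18171 — 2 statements merged into one kernel-verified Lean document; each statement's English description precedes it below -/
import Mathlib

section
/- Consider the planar system ẋ₁ = -x₁³ + x₁⁵x₂, ẋ₂ = -x₂³ - x₁⁶, and the quadratic function V(x) = c₀x₁² + c₁x₂² + c₂x₁x₂. If the Lie derivative ∇V·f satisfies ∇V(x)·f(x) ≤ 0 for all x ∈ ℝ², then c₂ = 0 and c₀ = c₁. -/
lemma key6 (A B D : ℝ) (h : ∀ t : ℝ, 1 ≤ t → D + A * t ^ 4 + B * t ^ 6 ≤ 0) :
    B ≤ 0 := by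
  by_contra hB
  push_neg at hB
  set t : ℝ := max 1 ((|A| + |D| + 1) / B) with ht
  have ht1 : (1 : ℝ) ≤ t := le_max_left _ _
  have ht2 : (|A| + |D| + 1) / B ≤ t := le_max_right _ _
  have hBt : |A| + |D| + 1 ≤ t * B := (div_le_iff₀ hB).mp ht2
  have h0 : (0 : ℝ) < t := lt_of_lt_of_le one_pos ht1
  have hmain := h t ht1
  have e1 : (|A| + |D| + 1) * t ^ 5 ≤ B * t ^ 6 := by
    have := mul_le_mul_of_nonneg_right hBt (pow_nonneg h0.le 5)
    nlinarith [this]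
  have e2 : t ^ 4 ≤ t ^ 5 := pow_le_pow_right₀ ht1 (by norm_num)
  have e3 : (1 : ℝ) ≤ t ^ 4 := one_le_pow₀ ht1
  have e4 : (|A| + |D| + 1) * t ^ 4 ≤ (|A| + |D| + 1) * t ^ 5 :=
    mul_le_mul_of_nonneg_left e2 (by positivity)
  have e5 : -|A| * t ^ 4 ≤ A * t ^ 4 :=
    mul_le_mul_of_nonneg_right (neg_abs_le A) (pow_nonneg h0.le 4)
  have e6 : (|D| + 1) * 1 ≤ (|D| + 1) * t ^ 4 :=
    mul_le_mul_of_nonneg_left e3 (by positivity)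
  have e7 : -|D| ≤ D := neg_abs_le D
  nlinarith [e1, e4, e5, e6, e7, hmain]

lemma key7 (A B : ℝ) (h : ∀ t : ℝ, 1 ≤ t → A * t ^ 4 + B * t ^ 7 ≤ 0) :
    B ≤ 0 := by
  by_contra hB
  push_neg at hB
  set t : ℝ := max 1 ((|A| + 1) / B) with ht
  have ht1 : (1 : ℝ) ≤ t := le_max_left _ _
  have ht2 : (|A| + 1) / B ≤ t := le_max_right _ _
  have hBt : |A| + 1 ≤ t * B := (div_le_iff₀ hB).mp ht2
  have h0 : (0 : ℝ) < t := lt_of_lt_of_le one_pos ht1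
  have hmain := h t ht1
  have e1 : (|A| + 1) * t ^ 6 ≤ B * t ^ 7 := by
    have := mul_le_mul_of_nonneg_right hBt (pow_nonneg h0.le 6)
    nlinarith [this]
  have e2 : t ^ 4 ≤ t ^ 6 := pow_le_pow_right₀ ht1 (by norm_num)
  have e4 : (|A| + 1) * t ^ 4 ≤ (|A| + 1) * t ^ 6 :=
    mul_le_mul_of_nonneg_left e2 (by positivity)
  have e5 : -|A| * t ^ 4 ≤ A * t ^ 4 :=
    mul_le_mul_of_nonneg_right (neg_abs_le A) (pow_nonneg h0.le 4)
  have e3 : (1 : ℝ) ≤ t ^ 4 := one_le_pow₀ ht1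
  nlinarith [e1, e4, e5, e3, hmain]

theorem stmt_7 (c0 c1 c2 : ℝ)
    (h : ∀ x1 x2 : ℝ,
      (2 * c0 * x1 + c2 * x2) * (-x1 ^ 3 + x1 ^ 5 * x2) +
        (2 * c1 * x2 + c2 * x1) * (-x2 ^ 3 - x1 ^ 6) ≤ 0) :
    c2 = 0 ∧ c0 = c1 := by
  have hc2le : -c2 ≤ 0 := by
    apply key7 (-2 * c0) (-c2)
    intro t ht
    have := h t 0
    nlinarith [this]
  have hc2ge : c2 ≤ 0 := by
    apply key7 (-2 * c0) c2
    intro t ht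
    have := h (-t) 0
    nlinarith [this]
  have hc2 : c2 = 0 := le_antisymm hc2ge (by linarith)
  subst hc2
  refine ⟨rfl, ?_⟩
  have h1 : 2 * c0 - 2 * c1 ≤ 0 := by
    apply key6 (-2 * c0) (2 * c0 - 2 * c1) (-2 * c1)
    intro t ht
    have := h t 1
    nlinarith [this]
  have h2 : 2 * c1 - 2 * c0 ≤ 0 := by
    apply key6 (-2 * c0) (2 * c1 - 2 * c0) (-2 * c1)
    intro t ht
    have := h t (-1)
    nlinarith [this]
  linarith
end

section
/- Consider the system ẋ₁ = -x₁³ + x₁⁵x₂, ẋ₂ = -x₂³ - x₁⁶ and the family V(x) = c₀x₁² + c₁x₂² + c₂x₁x₂. For any finite set of nonzero sample points {y_j}_{j=1}^N in ℝ², there exist coefficients with c₂ = 0 and c₀ ≠ c₁ such that V(y_j) > 0 and ∇V(y_j)·f(y_j) < 0 for all j = 1, …, N. -/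
theorem stmt_18 (N : ℕ) (y : Fin N → ℝ × ℝ) (hy : ∀ j, y j ≠ 0) :
    ∃ c0 c1 c2 : ℝ, c2 = 0 ∧ c0 ≠ c1 ∧
      ∀ j : Fin N,
        c0 * (y j).1 ^ 2 + c1 * (y j).2 ^ 2 + c2 * (y j).1 * (y j).2 > 0 ∧
        (2 * c0 * (y j).1 + c2 * (y j).2) * (-(y j).1 ^ 3 + (y j).1 ^ 5 * (y j).2) +
          (2 * c1 * (y j).2 + c2 * (y j).1) * (-(y j).2 ^ 3 - (y j).1 ^ 6) < 0 := by
  set g : Fin N → ℝ := fun j =>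
    ((y j).1 ^ 4 + (y j).2 ^ 4) / ((y j).1 ^ 6 * |(y j).2| + (y j).1 ^ 4 + 1) with hg
  have hden : ∀ j, (0:ℝ) < (y j).1 ^ 6 * |(y j).2| + (y j).1 ^ 4 + 1 := by
    intro j
    have h1 : (0:ℝ) ≤ (y j).1 ^ 6 * |(y j).2| := by positivity
    nlinarith [sq_nonneg ((y j).1 ^ 2)]
  have hne : ∀ j, (y j).1 ≠ 0 ∨ (y j).2 ≠ 0 := by
    intro j
    by_contra hc
    push_neg at hc
    exact hy j (Prod.ext hc.1 hc.2)
  have hnum : ∀ j, (0:ℝ) < (y j).1 ^ 4 + (y j).2 ^ 4 := by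
    intro j
    rcases hne j with h1 | h1
    · have : (y j).1 ^ 4 > 0 := by positivity
      nlinarith [sq_nonneg ((y j).2 ^ 2)]
    · have : (y j).2 ^ 4 > 0 := by positivity
      nlinarith [sq_nonneg ((y j).1 ^ 2)]
  have hgpos : ∀ j, 0 < g j := fun j => div_pos (hnum j) (hden j)
  set S : Finset ℝ := insert 1 (Finset.univ.image g) with hS
  have hSne : S.Nonempty := ⟨1, Finset.mem_insert_self _ _⟩
  set ε : ℝ := S.min' hSne with hε
  have hεpos : 0 < ε := by
    rw [hε, Finset.lt_min'_iff]
    intro b hb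
    rcases Finset.mem_insert.mp hb with h | h
    · rw [h]; norm_num
    · rcases Finset.mem_image.mp h with ⟨j, _, hj⟩
      rw [← hj]; exact hgpos j
  have hεle : ∀ j, ε ≤ g j := by
    intro j
    apply Finset.min'_le
    exact Finset.mem_insert_of_mem (Finset.mem_image_of_mem g (Finset.mem_univ j))
  refine ⟨1 + ε, 1, 0, rfl, by linarith, fun j => ?_⟩
  have hnum' := hnum j
  have hden' := hden j
  have hεg := hεle j
  simp only [hg] at hεg
  have key : ε * ((y j).1 ^ 6 * |(y j).2| + (y j).1 ^ 4 + 1) ≤ (y j).1 ^ 4 + (y j).2 ^ 4 := by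
    rw [← le_div_iff₀ hden']
    exact hεg
  constructor
  · rcases hne j with h1 | h1
    · have hx : (0:ℝ) < (y j).1 ^ 2 := by positivity
      nlinarith [sq_nonneg (y j).2]
    · have hx : (0:ℝ) < (y j).2 ^ 2 := by positivity
      nlinarith [sq_nonneg (y j).1]
  · have habs : (y j).2 ≤ |(y j).2| := le_abs_self _
    have hx6 : (0:ℝ) ≤ (y j).1 ^ 6 := by positivity
    nlinarith [mul_nonneg (mul_nonneg hεpos.le hx6) (sub_nonneg.mpr habs),
      sq_nonneg ((y j).1 ^ 2), mul_nonneg hεpos.le (sq_nonneg ((y j).1 ^ 2))]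
end
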